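/- Let λ ∈ ℂ*, a, b, ċ, h, a₁, b₁ ∈ ℂ, and let W ∈ O_𝔚 be a nontrivial simple 𝔚-module. Then none of the simple Virasoro modules among L(W, λ, a, b), L₀(a, b) and L₁(a, b) is isomorphic to a simple Virasoro submodule of the tensor product V(ċ, h) ⊗ A'_{a₁,b₁}. -/
import Mathlib


/-- A representation of the Witt algebra `𝔚 = span{d_i : i ≥ -1}`, encoded by the family of
operators `d i` (only the indices `i ≥ -1` are relevant) satisfying
`[d_m, d_n] = (n - m) d_{m+n}`. -/
structure WittRep (W : Type*) [AddCommGroup W] [Module ℂ W] where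
  d : ℤ → W →ₗ[ℂ] W
  comm : ∀ m n : ℤ, -1 ≤ m → -1 ≤ n →
    d m ∘ₗ d n - d n ∘ₗ d m = (((n - m : ℤ) : ℂ)) • d (m + n)

namespace WittRep

variable {W : Type*} [AddCommGroup W] [Module ℂ W]

/-- Condition A : the module lies in the category `O_𝔚`. -/
def InO (ρ : WittRep W) : Prop :=
  ∀ v : W, ∃ n : ℕ, ∀ i : ℤ, (n : ℤ) ≤ i → ρ.d i v = 0

/-- The module is trivial: the Lie algebra acts by zero. -/
def IsTrivial (ρ : WittRep W) : Prop := ∀ i : ℤ, -1 ≤ i → ρ.d i = 0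

/-- A `𝔚`-submodule. -/
def Invariant (ρ : WittRep W) (U : Submodule ℂ W) : Prop :=
  ∀ i : ℤ, -1 ≤ i → ∀ u ∈ U, ρ.d i u ∈ U

/-- Simplicity of a `𝔚`-module. -/
def IsSimple (ρ : WittRep W) : Prop :=
  (∃ v : W, v ≠ 0) ∧ ∀ U : Submodule ℂ W, ρ.Invariant U → U = ⊥ ∨ U = ⊤

/-- A `𝔟`-submodule (`𝔟 = span{d_i : i ≥ 0}`). -/
def BInvariant (ρ : WittRep W) (U : Submodule ℂ W) : Prop :=
  ∀ i : ℤ, 0 ≤ i → ∀ u ∈ U, ρ.d i u ∈ U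

/-- The socle `Soc_𝔟(W)`: the sum of the minimal nonzero `𝔟`-submodules. -/
def Soc (ρ : WittRep W) : Submodule ℂ W :=
  sSup {U | ρ.BInvariant U ∧ U ≠ ⊥ ∧
    ∀ U' : Submodule ℂ W, ρ.BInvariant U' → U' ≠ ⊥ → U' ≤ U → U' = U}

/-- `w₀` is a highest weight vector of weight `b'`. -/
def IsHW (ρ : WittRep W) (w₀ : W) (b' : ℂ) : Prop :=
  w₀ ≠ 0 ∧ ρ.d 0 w₀ = b' • w₀ ∧ ∀ i : ℤ, 1 ≤ i → ρ.d i w₀ = 0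

/-- `w₀` generates the `𝔚`-module. -/
def Generates (ρ : WittRep W) (w₀ : W) : Prop :=
  ∀ U : Submodule ℂ W, ρ.Invariant U → w₀ ∈ U → U = ⊤

/-- The operator `e^{kt} d/dt = Σ_{i ≥ 0} (k^i/i!) d_{i-1}` (a finite sum on each vector of a
module in `O_𝔚`). -/
noncomputable def E (ρ : WittRep W) (k : ℤ) (w : W) : W :=
  ∑ᶠ i : ℕ, (((k : ℂ) ^ i) / (Nat.factorial i : ℂ)) • ρ.d ((i : ℤ) - 1) w

/-- The action of `d_k` on `L(W, λ, a, b) = W ⊗ ℂ[t, t⁻¹]`, realized on `ℤ →₀ W`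
(`w ⊗ t^j ↦ Finsupp.single j w`):
`d_k · (w ⊗ t^j) = ((λ^k e^{kt} − 1) d/dt + a + kb + j) w ⊗ t^{k+j}`. -/
noncomputable def Lact (ρ : WittRep W) (lam a b : ℂ) (k : ℤ) (f : ℤ →₀ W) : ℤ →₀ W :=
  f.sum fun j w => Finsupp.single (k + j)
    (lam ^ k • ρ.E k w - ρ.d (-1) w + (a + (k : ℂ) * b + (j : ℂ)) • w)

/-- The PBW map `ℕ →₀ ℂ → W`, `(k, c) ↦ c • d_{-1}^k w₀`. -/
noncomputable def pbwMap (ρ : WittRep W) (w₀ : W) : (ℕ →₀ ℂ) →ₗ[ℂ] W :=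
  Finsupp.lsum ℂ fun k : ℕ => ((ρ.d (-1)) ^ k) ∘ₗ LinearMap.toSpanSingleton ℂ W w₀

/-- `W` is the Verma `𝔚`-module with highest weight vector `w₀` of highest weight `b'`. -/
def IsVerma (ρ : WittRep W) (w₀ : W) (b' : ℂ) : Prop :=
  ρ.d 0 w₀ = b' • w₀ ∧ (∀ i : ℤ, 1 ≤ i → ρ.d i w₀ = 0) ∧
    Function.Bijective (ρ.pbwMap w₀)

/-- `W^{(n)} = Σ_{i=0}^n d_{-1}^i (Soc_𝔟 W)`. -/
noncomputable def Wn (ρ : WittRep W) (n : ℕ) : Submodule ℂ W :=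
  ⨆ i : Fin (n + 1), Submodule.map ((ρ.d (-1)) ^ (i : ℕ)) ρ.Soc

/-- `L₀(a, b') = span{d₁^i · (w₀ ⊗ t^{2j})} ⊆ L(W, -1, a, b' + 1)`. -/
noncomputable def Lzero (ρ : WittRep W) (a b' : ℂ) (w₀ : W) : Submodule ℂ (ℤ →₀ W) :=
  Submodule.span ℂ
    {g | ∃ (i : ℕ) (j : ℤ), g = (ρ.Lact (-1) a (b' + 1) 1)^[i] (Finsupp.single (2 * j) w₀)}

/-- `L₁(a, b') = span{d₁^i · (w₀ ⊗ t^{2j+1})} ⊆ L(W, -1, a, b' + 1)`. -/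
noncomputable def Lone (ρ : WittRep W) (a b' : ℂ) (w₀ : W) : Submodule ℂ (ℤ →₀ W) :=
  Submodule.span ℂ
    {g | ∃ (i : ℕ) (j : ℤ), g = (ρ.Lact (-1) a (b' + 1) 1)^[i] (Finsupp.single (2 * j + 1) w₀)}

end WittRep

/-- A representation of the Lie algebra `𝔟 = span{d_i : i ≥ 0}`. -/
structure BRep (B : Type*) [AddCommGroup B] [Module ℂ B] where
  d : ℕ → B →ₗ[ℂ] B
  comm : ∀ m n : ℕ, d m ∘ₗ d n - d n ∘ₗ d m = (((n : ℂ) - (m : ℂ))) • d (m + n)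

namespace BRep

variable {B : Type*} [AddCommGroup B] [Module ℂ B]

/-- Condition A : the module lies in the category `O_𝔟`. -/
def InO (ρ : BRep B) : Prop := ∀ v : B, ∃ n : ℕ, ∀ i : ℕ, n ≤ i → ρ.d i v = 0

def IsTrivial (ρ : BRep B) : Prop := ∀ i : ℕ, ρ.d i = 0

def IsSimple (ρ : BRep B) : Prop :=
  (∃ v : B, v ≠ 0) ∧
    ∀ U : Submodule ℂ B, (∀ i : ℕ, ∀ u ∈ U, ρ.d i u ∈ U) → U = ⊥ ∨ U = ⊤

/-- The set of `r ∈ ℤ≥0` such that `d_{r+i} v = 0` for all `i ≥ 1`;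
`ord_𝔟(v)` is its least element. -/
def ordSet (ρ : BRep B) (v : B) : Set ℕ := {r : ℕ | ∀ i : ℕ, r + 1 ≤ i → ρ.d i v = 0}

/-- The action of `d_m` on the Virasoro module `N(B_(c), a) = B ⊗ ℂ[t, t⁻¹]`, realized on
`ℤ →₀ B`:  `d_m · (w ⊗ t^j) = (Σ_{i≥1} (m^i/i!) d_{i-1} + mc + a + j) w ⊗ t^{m+j}`
(`c` is the twist of the `d₀`-action; `c = 0` gives `N(B, a)`). -/
noncomputable def Nact (ρ : BRep B) (a c : ℂ) (m : ℤ) (f : ℤ →₀ B) : ℤ →₀ B :=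
  f.sum fun j w => Finsupp.single (m + j)
    ((∑ᶠ i : ℕ, (((m : ℂ) ^ (i + 1)) / (Nat.factorial (i + 1) : ℂ)) • ρ.d i w) +
      ((m : ℂ) * c + a + (j : ℂ)) • w)

end BRep

/-- For a family `U : ℤ → Submodule ℂ W`, the subspace `⊕_j U j ⊗ t^j` of `W ⊗ ℂ[t,t⁻¹]`. -/
def gradedSub {W : Type*} [AddCommGroup W] [Module ℂ W] (U : ℤ → Submodule ℂ W) :
    Submodule ℂ (ℤ →₀ W) where
  carrier := {f | ∀ j, f j ∈ U j}
  add_mem' := fun hf hg j => by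
    simpa only [Finsupp.add_apply] using (U j).add_mem (hf j) (hg j)
  zero_mem' := fun j => by simp
  smul_mem' := fun c f hf j => by
    simpa only [Finsupp.smul_apply] using (U j).smul_mem c (hf j)

/-- A submodule invariant under a (ℤ-indexed) family of operators. -/
def ActInvariant {V : Type*} [AddCommGroup V] [Module ℂ V] (act : ℤ → V → V)
    (M : Submodule ℂ V) : Prop :=
  ∀ k : ℤ, ∀ u ∈ M, act k u ∈ M

/-- Simplicity of the module given by a family of operators (the central element acts by zero). -/
def ActSimple {V : Type*} [AddCommGroup V] [Module ℂ V] (act : ℤ → V → V) : Prop :=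
  (∃ v : V, v ≠ 0) ∧ ∀ M : Submodule ℂ V, ActInvariant act M → M = ⊥ ∨ M = ⊤

/-- A representation of the Virasoro algebra. -/
structure VirasoroRep (V : Type*) [AddCommGroup V] [Module ℂ V] where
  d : ℤ → V →ₗ[ℂ] V
  z : V →ₗ[ℂ] V
  comm : ∀ m n : ℤ, d m ∘ₗ d n - d n ∘ₗ d m =
    (((n - m : ℤ) : ℂ)) • d (m + n) +
      (if m + n = 0 then (((n : ℂ) ^ 3 - (n : ℂ)) / 12) else 0) • z
  comm_z : ∀ m : ℤ, d m ∘ₗ z = z ∘ₗ d m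

/-- Simplicity of a Virasoro module. -/
def VirasoroRep.IsSimple {V : Type*} [AddCommGroup V] [Module ℂ V]
    (τ : VirasoroRep V) : Prop :=
  (∃ v : V, v ≠ 0) ∧
    ∀ U : Submodule ℂ V, (∀ m : ℤ, ∀ u ∈ U, τ.d m u ∈ U) → (∀ u ∈ U, τ.z u ∈ U) →
      U = ⊥ ∨ U = ⊤

/-- The Virasoro action on the tensor product of two Virasoro modules. -/
noncomputable def tensD {V A : Type*} [AddCommGroup V] [Module ℂ V]
    [AddCommGroup A] [Module ℂ A] (τ : VirasoroRep V) (σ : VirasoroRep A) (m : ℤ) :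
    TensorProduct ℂ V A →ₗ[ℂ] TensorProduct ℂ V A :=
  TensorProduct.map (τ.d m) LinearMap.id + TensorProduct.map LinearMap.id (σ.d m)

/-- `S` is a simple Virasoro submodule of the tensor product. -/
def SimpleTensSub {V A : Type*} [AddCommGroup V] [Module ℂ V]
    [AddCommGroup A] [Module ℂ A] (τ : VirasoroRep V) (σ : VirasoroRep A)
    (S : Submodule ℂ (TensorProduct ℂ V A)) : Prop :=
  S ≠ ⊥ ∧ (∀ m : ℤ, ∀ u ∈ S, tensD τ σ m u ∈ S) ∧
    ∀ S' : Submodule ℂ (TensorProduct ℂ V A),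
      S' ≤ S → (∀ m : ℤ, ∀ u ∈ S', tensD τ σ m u ∈ S') → S' = ⊥ ∨ S' = S

/-! ### Auxiliary machinery for the proof -/

section PolyVanish

variable {W : Type*} [AddCommGroup W] [Module ℂ W]

lemma poly_vanish (n : ℕ) (c : ℕ → W) (S : ℤ)
    (h : ∀ k : ℤ, S ≤ k → ∑ t ∈ Finset.range (n+1), ((k:ℂ))^t • c t = 0) :
    ∀ t, t ≤ n → c t = 0 := by
  classical
  set ℬ := Module.Basis.ofVectorSpace ℂ W with hB
  intro t ht
  apply ℬ.ext_elem
  intro ix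
  simp only [map_zero, Finsupp.coe_zero, Pi.zero_apply]
  set q : Polynomial ℂ := ∑ s ∈ Finset.range (n+1), Polynomial.C (ℬ.repr (c s) ix) * Polynomial.X ^ s with hq
  have hroot : ∀ k : ℤ, S ≤ k → q.IsRoot ((k:ℤ):ℂ) := by
    intro k hk
    have h2 := congrArg (fun x => ℬ.repr x ix) (h k hk)
    simp only [map_sum, map_smul, map_zero, Finsupp.coe_zero, Pi.zero_apply,
      Finsupp.coe_smul, Pi.smul_apply, smul_eq_mul, Finsupp.finset_sum_apply] at h2
    simp only [Polynomial.IsRoot, hq, Polynomial.eval_finset_sum, Polynomial.eval_mul,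
      Polynomial.eval_C, Polynomial.eval_pow, Polynomial.eval_X]
    rw [← h2]
    exact Finset.sum_congr rfl fun s _ => by simp [mul_comm]
  have hq0 : q = 0 := by
    apply Polynomial.eq_zero_of_infinite_isRoot
    apply Set.infinite_of_injective_forall_mem (f := fun (j : ℕ) => ((S + (j:ℤ) : ℤ) : ℂ))
    case hi =>
      intro a b hab
      simp only [Int.cast_inj] at hab
      omega
    case hf =>
      intro j
      exact hroot (S + j) (by omega)
  have hco := congrArg (fun p => Polynomial.coeff p t) hq0
  simp only [hq, Polynomial.finset_sum_coeff, Polynomial.coeff_C_mul, Polynomial.coeff_X_pow,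
    Polynomial.coeff_zero, mul_ite, mul_one, mul_zero] at hco
  rwa [Finset.sum_ite_eq (Finset.range (n+1)) t, if_pos (Finset.mem_range.2 (by omega))] at hco

end PolyVanish

namespace WittRep

variable {W : Type*} [AddCommGroup W] [Module ℂ W] (ρ : WittRep W)

lemma E_zero (k : ℤ) : ρ.E k 0 = 0 := by
  unfold E; simp

lemma Lact_single (lam a b : ℂ) (k c : ℤ) (v : W) :
    ρ.Lact lam a b k (Finsupp.single c v)
      = Finsupp.single (k + c)
          (lam ^ k • ρ.E k v - ρ.d (-1) v + (a + (k:ℂ) * b + (c:ℂ)) • v) := by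
  unfold Lact
  rw [Finsupp.sum_single_index]
  simp [E_zero]

lemma E_eq_sum (k : ℤ) (v : W) (n : ℕ) (hv : ∀ i : ℤ, (n:ℤ) ≤ i → ρ.d i v = 0) :
    ρ.E k v = ∑ i ∈ Finset.range (n+1),
      (((k:ℂ)^i) / (Nat.factorial i : ℂ)) • ρ.d ((i:ℤ) - 1) v := by
  unfold E
  apply finsum_eq_finset_sum_of_support_subset
  intro i hi
  simp only [Function.mem_support] at hi
  simp only [Finset.coe_range, Set.mem_Iio]
  by_contra hc
  push_neg at hc
  exact hi (by rw [hv ((i:ℤ)-1) (by omega), smul_zero])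

lemma E_add (k : ℤ) (x y : W) (nx ny : ℕ) (hx : ∀ i:ℤ, (nx:ℤ) ≤ i → ρ.d i x = 0)
    (hy : ∀ i:ℤ, (ny:ℤ) ≤ i → ρ.d i y = 0) : ρ.E k (x + y) = ρ.E k x + ρ.E k y := by
  have hx' : ∀ i:ℤ, ((max nx ny : ℕ):ℤ) ≤ i → ρ.d i x = 0 := fun i hi => hx i (by
    have : (nx:ℤ) ≤ ((max nx ny : ℕ):ℤ) := by exact_mod_cast Nat.le_max_left nx ny
    omega)
  have hy' : ∀ i:ℤ, ((max nx ny : ℕ):ℤ) ≤ i → ρ.d i y = 0 := fun i hi => hy i (by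
    have : (ny:ℤ) ≤ ((max nx ny : ℕ):ℤ) := by exact_mod_cast Nat.le_max_right nx ny
    omega)
  have hxy : ∀ i:ℤ, ((max nx ny : ℕ):ℤ) ≤ i → ρ.d i (x + y) = 0 := fun i hi => by
    rw [map_add, hx' i hi, hy' i hi, add_zero]
  rw [ρ.E_eq_sum k x (max nx ny) hx', ρ.E_eq_sum k y (max nx ny) hy',
    ρ.E_eq_sum k (x+y) (max nx ny) hxy, ← Finset.sum_add_distrib]
  exact Finset.sum_congr rfl fun i _ => by rw [map_add, smul_add]

end WittRep

section Qside

variable {V A : Type*} [AddCommGroup V] [Module ℂ V] [AddCommGroup A] [Module ℂ A]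

/-- Every vector of `V(ċ,h)` is annihilated by `d_k` for `k` large. -/
lemma Vcat (τ : VirasoroRep V) (hτs : τ.IsSimple) (v₁ : V) (hv₁ : v₁ ≠ 0)
    (hdi : ∀ i : ℤ, 1 ≤ i → τ.d i v₁ = 0) :
    ∀ x : V, ∃ N : ℕ, ∀ k : ℤ, (N:ℤ) ≤ k → τ.d k x = 0 := by
  classical
  set U : Submodule ℂ V :=
    { carrier := {x | ∃ N : ℕ, ∀ k : ℤ, (N:ℤ) ≤ k → τ.d k x = 0}
      add_mem' := by
        rintro x y ⟨N1, h1⟩ ⟨N2, h2⟩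
        refine ⟨max N1 N2, fun k hk => ?_⟩
        have hN1 : (N1:ℤ) ≤ k := le_trans (by exact_mod_cast Nat.le_max_left N1 N2) hk
        have hN2 : (N2:ℤ) ≤ k := le_trans (by exact_mod_cast Nat.le_max_right N1 N2) hk
        rw [map_add, h1 k hN1, h2 k hN2, add_zero]
      zero_mem' := ⟨0, fun k _ => map_zero _⟩
      smul_mem' := by
        rintro c x ⟨N, hN⟩
        exact ⟨N, fun k hk => by rw [map_smul, hN k hk, smul_zero]⟩ } with hU
  have hdInv : ∀ m : ℤ, ∀ x ∈ U, τ.d m x ∈ U := by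
    rintro j x ⟨N, hN⟩
    refine ⟨N + j.natAbs + 1, fun k hk => ?_⟩
    have hk1 : (N:ℤ) ≤ k := by omega
    have hk2 : (N:ℤ) ≤ j + k := by omega
    have hk3 : j + k ≠ 0 := by omega
    have hc := LinearMap.congr_fun (τ.comm j k) x
    simp only [LinearMap.sub_apply, LinearMap.comp_apply, LinearMap.add_apply,
      LinearMap.smul_apply, hN k hk1, hN (j+k) hk2, if_neg hk3, map_zero, smul_zero,
      zero_smul, add_zero, zero_sub, neg_eq_zero] at hc
    exact hc
  have hzInv : ∀ x ∈ U, τ.z x ∈ U := by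
    rintro x ⟨N, hN⟩
    refine ⟨N, fun k hk => ?_⟩
    have hc := LinearMap.congr_fun (τ.comm_z k) x
    simp only [LinearMap.comp_apply] at hc
    rw [hc, hN k hk, map_zero]
  rcases hτs.2 U hdInv hzInv with h | h
  · exfalso
    have : v₁ ∈ U := ⟨1, fun k hk => hdi k (by exact_mod_cast hk)⟩
    rw [h] at this
    exact hv₁ (by simpa using this)
  · intro x
    have : x ∈ U := by rw [h]; trivial
    exact this

/-- Key property (Q) of the tensor module `V(ċ,h) ⊗ A'`. -/
lemma Qlemma (τ : VirasoroRep V) (hτs : τ.IsSimple) (v₁ : V) (hv₁ : v₁ ≠ 0)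
    (hdi : ∀ i : ℤ, 1 ≤ i → τ.d i v₁ = 0)
    (σ : VirasoroRep A) (a₁ b₁ : ℂ) (vA : ℤ → A)
    (hspan : Submodule.span ℂ (Set.range vA) = ⊤)
    (hAct : ∀ m n : ℤ, σ.d m (vA n) = (a₁ + (n : ℂ) + b₁ * (m : ℂ)) • vA (n + m)) :
    ∀ u : TensorProduct ℂ V A, ∃ s : ℕ, ∀ m p : ℤ, (s:ℤ) ≤ m → (s:ℤ) ≤ p →
      tensD τ σ (p+3) (tensD τ σ m u) - (3:ℂ) • tensD τ σ (p+2) (tensD τ σ (m+1) u)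
        + (3:ℂ) • tensD τ σ (p+1) (tensD τ σ (m+2) u) - tensD τ σ p (tensD τ σ (m+3) u) = 0 := by
  classical
  set Q : TensorProduct ℂ V A → Prop := fun u => ∃ s : ℕ, ∀ m p : ℤ, (s:ℤ) ≤ m → (s:ℤ) ≤ p →
      tensD τ σ (p+3) (tensD τ σ m u) - (3:ℂ) • tensD τ σ (p+2) (tensD τ σ (m+1) u)
        + (3:ℂ) • tensD τ σ (p+1) (tensD τ σ (m+2) u) - tensD τ σ p (tensD τ σ (m+3) u) = 0
    with hQdef
  have hQ0 : Q 0 := ⟨0, fun m p _ _ => by simp⟩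
  have hQadd : ∀ x y, Q x → Q y → Q (x + y) := by
    rintro x y ⟨s1, h1⟩ ⟨s2, h2⟩
    refine ⟨max s1 s2, fun m p hm hp => ?_⟩
    have hs1m : ((s1:ℕ):ℤ) ≤ m := le_trans (by exact_mod_cast Nat.le_max_left s1 s2) hm
    have hs2m : ((s2:ℕ):ℤ) ≤ m := le_trans (by exact_mod_cast Nat.le_max_right s1 s2) hm
    have hs1p : ((s1:ℕ):ℤ) ≤ p := le_trans (by exact_mod_cast Nat.le_max_left s1 s2) hp
    have hs2p : ((s2:ℕ):ℤ) ≤ p := le_trans (by exact_mod_cast Nat.le_max_right s1 s2) hp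
    have e1 := h1 m p hs1m hs1p
    have e2 := h2 m p hs2m hs2p
    simp only [map_add, smul_add]
    calc _ = (tensD τ σ (p+3) (tensD τ σ m x) - (3:ℂ) • tensD τ σ (p+2) (tensD τ σ (m+1) x)
        + (3:ℂ) • tensD τ σ (p+1) (tensD τ σ (m+2) x) - tensD τ σ p (tensD τ σ (m+3) x))
        + (tensD τ σ (p+3) (tensD τ σ m y) - (3:ℂ) • tensD τ σ (p+2) (tensD τ σ (m+1) y)
        + (3:ℂ) • tensD τ σ (p+1) (tensD τ σ (m+2) y) - tensD τ σ p (tensD τ σ (m+3) y)) := by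
          abel
      _ = 0 := by rw [e1, e2, add_zero]
  have hQsmul : ∀ (c : ℂ) x, Q x → Q (c • x) := by
    rintro c x ⟨s, hs⟩
    refine ⟨s, fun m p hm hp => ?_⟩
    have e := hs m p hm hp
    simp only [map_smul]
    rw [smul_comm ((3:ℂ)) c, smul_comm ((3:ℂ)) c, ← smul_sub, ← smul_add, ← smul_sub]
    rw [show tensD τ σ (p+3) (tensD τ σ m x) - (3:ℂ) • tensD τ σ (p+2) (tensD τ σ (m+1) x)
        + (3:ℂ) • tensD τ σ (p+1) (tensD τ σ (m+2) x) - tensD τ σ p (tensD τ σ (m+3) x) = 0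
      from e, smul_zero]
    -- done
  have hpure : ∀ (x : V) (n : ℤ), Q (x ⊗ₜ[ℂ] vA n) := by
    intro x n
    obtain ⟨N, hN⟩ := Vcat τ hτs v₁ hv₁ hdi x
    refine ⟨N, fun m p hm hp => ?_⟩
    have e1 : ∀ (k j : ℤ), (N:ℤ) ≤ k →
        tensD τ σ k (x ⊗ₜ[ℂ] vA j) = (a₁ + (j:ℂ) + b₁ * (k:ℂ)) • (x ⊗ₜ[ℂ] vA (j + k)) := by
      intro k j hk
      unfold tensD
      simp only [LinearMap.add_apply, TensorProduct.map_tmul, LinearMap.id_apply,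
        hN k hk, TensorProduct.zero_tmul, hAct k j, TensorProduct.tmul_smul, zero_add]
    have hT0 : tensD τ σ (p+3) (tensD τ σ m (x ⊗ₜ[ℂ] vA n))
        = ((a₁ + (n:ℂ) + b₁ * (m:ℂ)) * (a₁ + ((n+m:ℤ):ℂ) + b₁ * ((p+3:ℤ):ℂ)))
            • (x ⊗ₜ[ℂ] vA (n + m + p + 3)) := by
      rw [e1 m n hm, map_smul, e1 (p+3) (n+m) (by omega), smul_smul,
        show (n + m) + (p + 3) = n + m + p + 3 by ring, mul_comm]
    have hT1 : tensD τ σ (p+2) (tensD τ σ (m+1) (x ⊗ₜ[ℂ] vA n))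
        = ((a₁ + (n:ℂ) + b₁ * ((m+1:ℤ):ℂ)) * (a₁ + ((n+(m+1):ℤ):ℂ) + b₁ * ((p+2:ℤ):ℂ)))
            • (x ⊗ₜ[ℂ] vA (n + m + p + 3)) := by
      rw [e1 (m+1) n (by omega), map_smul, e1 (p+2) (n+(m+1)) (by omega), smul_smul,
        show (n + (m+1)) + (p + 2) = n + m + p + 3 by ring, mul_comm]
    have hT2 : tensD τ σ (p+1) (tensD τ σ (m+2) (x ⊗ₜ[ℂ] vA n))
        = ((a₁ + (n:ℂ) + b₁ * ((m+2:ℤ):ℂ)) * (a₁ + ((n+(m+2):ℤ):ℂ) + b₁ * ((p+1:ℤ):ℂ)))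
            • (x ⊗ₜ[ℂ] vA (n + m + p + 3)) := by
      rw [e1 (m+2) n (by omega), map_smul, e1 (p+1) (n+(m+2)) (by omega), smul_smul,
        show (n + (m+2)) + (p + 1) = n + m + p + 3 by ring, mul_comm]
    have hT3 : tensD τ σ p (tensD τ σ (m+3) (x ⊗ₜ[ℂ] vA n))
        = ((a₁ + (n:ℂ) + b₁ * ((m+3:ℤ):ℂ)) * (a₁ + ((n+(m+3):ℤ):ℂ) + b₁ * ((p:ℤ):ℂ)))
            • (x ⊗ₜ[ℂ] vA (n + m + p + 3)) := by
      rw [e1 (m+3) n (by omega), map_smul, e1 p (n+(m+3)) hp, smul_smul,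
        show (n + (m+3)) + p = n + m + p + 3 by ring, mul_comm]
    rw [hT0, hT1, hT2, hT3, smul_smul, smul_smul, ← sub_smul, ← add_smul, ← sub_smul]
    convert zero_smul ℂ (x ⊗ₜ[ℂ] vA (n + m + p + 3)) using 2
    push_cast
    ring
  have hgen : ∀ (x : V) (y : A), Q (x ⊗ₜ[ℂ] y) := by
    intro x y
    have hy : y ∈ Submodule.span ℂ (Set.range vA) := by rw [hspan]; trivial
    refine Submodule.span_induction (p := fun y _ => Q (x ⊗ₜ[ℂ] y)) ?_ ?_ ?_ ?_ hy
    · rintro _ ⟨n, rfl⟩; exact hpure x n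
    · show Q (x ⊗ₜ[ℂ] (0:A))
      rw [TensorProduct.tmul_zero]; exact hQ0
    · intro y1 y2 _ _ q1 q2
      show Q (x ⊗ₜ[ℂ] (y1 + y2))
      rw [TensorProduct.tmul_add]; exact hQadd _ _ q1 q2
    · intro c y' _ q
      show Q (x ⊗ₜ[ℂ] (c • y'))
      rw [TensorProduct.tmul_smul]; exact hQsmul c _ q
  intro u
  have hu : u ∈ Submodule.span ℂ {t : TensorProduct ℂ V A | ∃ m n, m ⊗ₜ[ℂ] n = t} := by
    rw [TensorProduct.span_tmul_eq_top]; trivial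
  refine Submodule.span_induction (p := fun u _ => Q u) ?_ hQ0 (fun x y _ _ => hQadd x y)
    (fun c x _ => hQsmul c x) hu
  rintro _ ⟨x, y, rfl⟩
  exact hgen x y

end Qside
section Part1Machinery

variable {W : Type*} [AddCommGroup W] [Module ℂ W]

lemma ext_add_pow (x r : ℂ) (i n : ℕ) (h : i ≤ n) :
    (x + r)^i = ∑ t ∈ Finset.range (n+1), x^t * r^(i-t) * (Nat.choose i t : ℂ) := by
  rw [add_pow]
  apply Finset.sum_subset (Finset.range_subset_range.2 (by omega))
  intro t _ ht
  simp only [Finset.mem_range, not_lt] at ht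
  have : i < t := by omega
  simp [Nat.choose_eq_zero_of_lt this]

lemma rearrange (n : ℕ) (wv : ℕ → W) (lam x : ℂ) :
    lam^4 • (∑ i ∈ Finset.range (n+1), (((x+4)^i) / (Nat.factorial i : ℂ)) • wv i)
      - (4*lam^3) • (∑ i ∈ Finset.range (n+1), (((x+3)^i) / (Nat.factorial i : ℂ)) • wv i)
      + (6*lam^2) • (∑ i ∈ Finset.range (n+1), (((x+2)^i) / (Nat.factorial i : ℂ)) • wv i)
      - (4*lam) • (∑ i ∈ Finset.range (n+1), (((x+1)^i) / (Nat.factorial i : ℂ)) • wv i)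
      + (∑ i ∈ Finset.range (n+1), ((x^i) / (Nat.factorial i : ℂ)) • wv i)
    = ∑ t ∈ Finset.range (n+1), x^t •
        (∑ i ∈ Finset.range (n+1),
          (((lam^4*4^(i-t) - 4*lam^3*3^(i-t) + 6*lam^2*2^(i-t) - 4*lam*1^(i-t) + (0:ℂ)^(i-t))
            * (Nat.choose i t : ℂ)) / (Nat.factorial i : ℂ)) • wv i) := by
  have swap : ∑ t ∈ Finset.range (n+1), x^t •
        (∑ i ∈ Finset.range (n+1),
          (((lam^4*4^(i-t) - 4*lam^3*3^(i-t) + 6*lam^2*2^(i-t) - 4*lam*1^(i-t) + (0:ℂ)^(i-t))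
            * (Nat.choose i t : ℂ)) / (Nat.factorial i : ℂ)) • wv i)
      = ∑ i ∈ Finset.range (n+1),
          (∑ t ∈ Finset.range (n+1), x^t *
            (((lam^4*4^(i-t) - 4*lam^3*3^(i-t) + 6*lam^2*2^(i-t) - 4*lam*1^(i-t) + (0:ℂ)^(i-t))
              * (Nat.choose i t : ℂ)) / (Nat.factorial i : ℂ))) • wv i := by
    rw [Finset.sum_congr rfl (fun t _ => Finset.smul_sum)]
    rw [Finset.sum_comm]
    refine Finset.sum_congr rfl (fun i _ => ?_)
    rw [Finset.sum_smul]
    exact Finset.sum_congr rfl (fun t _ => by rw [smul_smul])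
  rw [swap, Finset.smul_sum, Finset.smul_sum, Finset.smul_sum, Finset.smul_sum,
    ← Finset.sum_sub_distrib, ← Finset.sum_add_distrib, ← Finset.sum_sub_distrib,
    ← Finset.sum_add_distrib]
  refine Finset.sum_congr rfl (fun i hi => ?_)
  have hin : i ≤ n := by simpa [Nat.lt_succ_iff] using Finset.mem_range.1 hi
  rw [smul_smul, smul_smul, smul_smul, smul_smul, ← sub_smul, ← add_smul, ← sub_smul, ← add_smul]
  congr 1
  have h0 : x^i = ∑ t ∈ Finset.range (n+1), x^t * (0:ℂ)^(i-t) * (Nat.choose i t : ℂ) := by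
    have := ext_add_pow x 0 i n hin
    rwa [add_zero] at this
  rw [ext_add_pow x 4 i n hin, ext_add_pow x 3 i n hin, ext_add_pow x 2 i n hin,
    ext_add_pow x 1 i n hin, h0]
  rw [div_eq_mul_inv, div_eq_mul_inv, div_eq_mul_inv, div_eq_mul_inv, div_eq_mul_inv,
    Finset.sum_mul, Finset.sum_mul, Finset.sum_mul, Finset.sum_mul, Finset.sum_mul,
    Finset.mul_sum, Finset.mul_sum, Finset.mul_sum, Finset.mul_sum,
    ← Finset.sum_sub_distrib, ← Finset.sum_add_distrib, ← Finset.sum_sub_distrib,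
    ← Finset.sum_add_distrib]
  refine Finset.sum_congr rfl (fun t _ => ?_)
  ring

lemma endgame_ne (n : ℕ) (wv : ℕ → W) (lam : ℂ) (hlam1 : lam ≠ 1)
    (hbd : ∀ i, n < i → wv i = 0)
    (hC : ∀ t, t ≤ n → (∑ i ∈ Finset.range (n+1),
      (((lam^4*4^(i-t) - 4*lam^3*3^(i-t) + 6*lam^2*2^(i-t) - 4*lam*1^(i-t) + (0:ℂ)^(i-t))
        * (Nat.choose i t : ℂ)) / (Nat.factorial i : ℂ)) • wv i) = 0) :
    ∀ i, wv i = 0 := by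
  have key : ∀ d : ℕ, ∀ t : ℕ, n ≤ t + d → wv t = 0 := by
    intro d
    induction d using Nat.strong_induction_on with
    | _ d IH =>
      intro t htd
      by_cases htn : n < t
      · exact hbd t htn
      push_neg at htn
      have hhi : ∀ i, t < i → wv i = 0 := by
        intro i hti
        by_cases hin : n < i
        · exact hbd i hin
        · push_neg at hin
          exact IH (n - i) (by omega) i (by omega)
      have hCt := hC t htn
      rw [Finset.sum_eq_single_of_mem t (Finset.mem_range.2 (by omega))] at hCt
      · rw [Nat.sub_self, pow_zero, pow_zero, pow_zero, pow_zero, pow_zero,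
          Nat.choose_self] at hCt
        have hne : ((lam^4*1 - 4*lam^3*1 + 6*lam^2*1 - 4*lam*1 + 1) * ((1:ℕ):ℂ))
            / (Nat.factorial t : ℂ) ≠ 0 := by
          apply div_ne_zero
          · rw [show (lam^4*1 - 4*lam^3*1 + 6*lam^2*1 - 4*lam*1 + 1) * ((1:ℕ):ℂ)
                = (lam - 1)^4 by push_cast; ring]
            exact pow_ne_zero 4 (sub_ne_zero.mpr hlam1)
          · exact_mod_cast Nat.cast_ne_zero.mpr (Nat.factorial_ne_zero t)
        exact (smul_eq_zero.mp hCt).resolve_left hne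
      · intro i _ hit
        rcases lt_or_gt_of_ne hit with hlt | hgt
        · simp [Nat.choose_eq_zero_of_lt (show i < t by omega)]
        · rw [hhi i hgt, smul_zero]
  intro i
  exact key n i (by omega)

lemma endgame_one (n : ℕ) (wv : ℕ → W) (lam : ℂ) (hlam1 : lam = 1)
    (hbd : ∀ i, n < i → wv i = 0)
    (hC : ∀ t, t ≤ n → (∑ i ∈ Finset.range (n+1),
      (((lam^4*4^(i-t) - 4*lam^3*3^(i-t) + 6*lam^2*2^(i-t) - 4*lam*1^(i-t) + (0:ℂ)^(i-t))
        * (Nat.choose i t : ℂ)) / (Nat.factorial i : ℂ)) • wv i) = 0) :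
    ∀ i, 4 ≤ i → wv i = 0 := by
  subst hlam1
  have key : ∀ d : ℕ, ∀ i : ℕ, 4 ≤ i → n ≤ i + d → wv i = 0 := by
    intro d
    induction d using Nat.strong_induction_on with
    | _ d IH =>
      intro i h4 hid
      by_cases hin : n < i
      · exact hbd i hin
      push_neg at hin
      have hhi : ∀ j, i < j → wv j = 0 := by
        intro j hij
        by_cases hjn : n < j
        · exact hbd j hjn
        · push_neg at hjn
          exact IH (n - j) (by omega) j (by omega) (by omega)
      set t := i - 4 with ht
      have hti : i = t + 4 := by omega
      have hCt := hC t (by omega)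
      rw [Finset.sum_eq_single_of_mem i (Finset.mem_range.2 (by omega))] at hCt
      · rw [hti, Nat.add_sub_cancel_left] at hCt
        have hne : ((1:ℂ)^4*4^4 - 4*1^3*3^4 + 6*1^2*2^4 - 4*1*1^4 + (0:ℂ)^4)
            * ((t+4).choose t : ℂ) / ((t+4).factorial : ℂ) ≠ 0 := by
          apply div_ne_zero
          · apply mul_ne_zero
            · norm_num
            · exact Nat.cast_ne_zero.mpr (Nat.choose_pos (by omega : t ≤ t+4)).ne'
          · exact Nat.cast_ne_zero.mpr (Nat.factorial_ne_zero (t+4))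
        rw [hti]
        exact (smul_eq_zero.mp hCt).resolve_left hne
      · intro i' _ hne
        by_cases hlt : i' < t
        · simp [Nat.choose_eq_zero_of_lt hlt]
        push_neg at hlt
        by_cases hgt : i < i'
        · rw [hhi i' hgt, smul_zero]
        push_neg at hgt
        have hcase : i' = t ∨ i' = t+1 ∨ i' = t+2 ∨ i' = t+3 := by omega
        rcases hcase with rfl | rfl | rfl | rfl
        · rw [Nat.sub_self]
          norm_num
        · rw [Nat.add_sub_cancel_left]
          norm_num
        · rw [Nat.add_sub_cancel_left]
          norm_num
        · rw [Nat.add_sub_cancel_left]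
          norm_num
  intro i h4
  exact key n i h4 (by omega)

end Part1Machinery
section Part1Core

variable {W V A : Type*} [AddCommGroup W] [Module ℂ W] [AddCommGroup V] [Module ℂ V]
  [AddCommGroup A] [Module ℂ A]

lemma part1core (ρ : WittRep W) (hO : ρ.InO) (hnt : ¬ ρ.IsTrivial)
    (lam a b : ℂ) (hlam : lam ≠ 0)
    (τ : VirasoroRep V) (σ : VirasoroRep A)
    (hQ : ∀ u : TensorProduct ℂ V A, ∃ s : ℕ, ∀ m p : ℤ, (s:ℤ) ≤ m → (s:ℤ) ≤ p →
      tensD τ σ (p+3) (tensD τ σ m u) - (3:ℂ) • tensD τ σ (p+2) (tensD τ σ (m+1) u)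
        + (3:ℂ) • tensD τ σ (p+1) (tensD τ σ (m+2) u) - tensD τ σ p (tensD τ σ (m+3) u) = 0)
    (S : Submodule ℂ (TensorProduct ℂ V A)) (φ : (ℤ →₀ W) ≃ₗ[ℂ] ↥S)
    (hφ : ∀ (m : ℤ) (f : ℤ →₀ W),
      (↑(φ (ρ.Lact lam a b m f)) : TensorProduct ℂ V A) = tensD τ σ m ↑(φ f)) :
    False := by
  classical
  -- Step 1 : transfer of property (Q) to `L(W, λ, a, b)`
  have transfer : ∀ f : ℤ →₀ W, ∃ s : ℕ, ∀ m p : ℤ, (s:ℤ) ≤ m → (s:ℤ) ≤ p →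
      ρ.Lact lam a b (p+3) (ρ.Lact lam a b m f)
        - (3:ℂ) • ρ.Lact lam a b (p+2) (ρ.Lact lam a b (m+1) f)
        + (3:ℂ) • ρ.Lact lam a b (p+1) (ρ.Lact lam a b (m+2) f)
        - ρ.Lact lam a b p (ρ.Lact lam a b (m+3) f) = 0 := by
    intro f
    obtain ⟨s, hs⟩ := hQ (↑(φ f))
    refine ⟨s, fun m p hm hp => ?_⟩
    have h0 := hs m p hm hp
    have hcoe : (↑(φ (ρ.Lact lam a b (p+3) (ρ.Lact lam a b m f)
        - (3:ℂ) • ρ.Lact lam a b (p+2) (ρ.Lact lam a b (m+1) f)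
        + (3:ℂ) • ρ.Lact lam a b (p+1) (ρ.Lact lam a b (m+2) f)
        - ρ.Lact lam a b p (ρ.Lact lam a b (m+3) f))) : TensorProduct ℂ V A) = 0 := by
      rw [map_sub, map_add, map_sub, map_smul, map_smul]
      simp only [AddSubgroupClass.coe_sub, Submodule.coe_add, SetLike.val_smul]
      simp only [hφ]
      exact h0
    exact φ.map_eq_zero_iff.mp ((ZeroMemClass.coe_eq_zero).mp hcoe)
  -- the operator `A_k(c)` on `W`
  set Am : ℤ → ℤ → W → W :=
    fun k c v => lam ^ k • ρ.E k v - ρ.d (-1) v + (a + (k:ℂ) * b + (c:ℂ)) • v with hAm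
  have hLs : ∀ (k c : ℤ) (v : W),
      ρ.Lact lam a b k (Finsupp.single c v) = Finsupp.single (k+c) (Am k c v) :=
    fun k c v => ρ.Lact_single lam a b k c v
  -- Step 2 : coefficient identity
  have key : ∀ (w : W) (j₀ : ℤ), ∃ s : ℕ, ∀ m p : ℤ, (s:ℤ) ≤ m → (s:ℤ) ≤ p →
      Am (p+3) (m+j₀) (Am m j₀ w) - (3:ℂ) • Am (p+2) ((m+1)+j₀) (Am (m+1) j₀ w)
        + (3:ℂ) • Am (p+1) ((m+2)+j₀) (Am (m+2) j₀ w)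
        - Am p ((m+3)+j₀) (Am (m+3) j₀ w) = 0 := by
    intro w j₀
    obtain ⟨s, hs⟩ := transfer (Finsupp.single j₀ w)
    refine ⟨s, fun m p hm hp => ?_⟩
    have h0 := hs m p hm hp
    rw [hLs m j₀ w, hLs (m+1) j₀ w, hLs (m+2) j₀ w, hLs (m+3) j₀ w,
      hLs (p+3) (m+j₀) _, hLs (p+2) ((m+1)+j₀) _, hLs (p+1) ((m+2)+j₀) _,
      hLs p ((m+3)+j₀) _] at h0
    rw [Finsupp.smul_single, Finsupp.smul_single,
      show (p+2) + ((m+1)+j₀) = (p+3) + (m+j₀) by ring,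
      show (p+1) + ((m+2)+j₀) = (p+3) + (m+j₀) by ring,
      show p + ((m+3)+j₀) = (p+3) + (m+j₀) by ring,
      ← Finsupp.single_sub, ← Finsupp.single_add, ← Finsupp.single_sub] at h0
    exact Finsupp.single_eq_zero.mp h0
  -- Am helper identities
  have Am_add : ∀ (k c : ℤ) (x y : W), Am k c (x+y) = Am k c x + Am k c y := by
    intro k c x y
    obtain ⟨nx, hnx⟩ := hO x
    obtain ⟨ny, hny⟩ := hO y
    simp only [hAm]
    rw [ρ.E_add k x y nx ny hnx hny, map_add, smul_add, smul_add]
    abel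
  have Am_sh : ∀ (k c : ℤ) (v : W), Am k (c+1) v = Am k c v + v := by
    intro k c v
    simp only [hAm]
    push_cast
    module
  have Am_one : ∀ (k : ℤ) (v : W), Am k 1 v = Am k 0 v + v := by
    intro k v
    simp only [hAm]
    push_cast
    module
  have Am_step : ∀ (P M : ℤ) (v : W),
      Am P (M+1) (Am M 1 v) = Am P M (Am M 0 v) + (Am M 0 v + (Am P M v + v)) := by
    intro P M v
    rw [Am_one M v, Am_add, Am_sh, Am_sh]
    abel
  -- Step 3 : for every w, the function g k = λ^k E_k w satisfies Δ⁴ g = 0 eventually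
  have main : ∀ (w : W) (j : ℤ), 3 ≤ j → ρ.d j w = 0 := by
    intro w
    obtain ⟨s0, hs0⟩ := key w 0
    obtain ⟨s1, hs1⟩ := key w 1
    have hrel : ∀ k : ℤ, ((max s0 s1 : ℕ):ℤ) ≤ k →
        lam^(k+4) • ρ.E (k+4) w - (4:ℂ) • (lam^(k+3) • ρ.E (k+3) w)
          + (6:ℂ) • (lam^(k+2) • ρ.E (k+2) w) - (4:ℂ) • (lam^(k+1) • ρ.E (k+1) w)
          + lam^k • ρ.E k w = 0 := by
      intro k hk
      have hk0 : ((s0:ℕ):ℤ) ≤ k := le_trans (by exact_mod_cast Nat.le_max_left s0 s1) hk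
      have hk1 : ((s1:ℕ):ℤ) ≤ k := le_trans (by exact_mod_cast Nat.le_max_right s0 s1) hk
      have h0 := hs0 k (k+1) hk0 (by omega)
      have h1 := hs1 k (k+1) hk1 (by omega)
      simp only [add_zero] at h0
      rw [Am_step, Am_step, Am_step, Am_step] at h1
      rw [show (k+1)+3 = k+4 by ring, show (k+1)+2 = k+3 by ring,
        show (k+1)+1 = k+2 by ring] at h0 h1
      have hE := congrArg₂ (fun (x y : W) => x - y) h1 h0
      simp only [sub_zero] at hE
      -- hE : h1LHS - h0LHS = 0
      calc lam^(k+4) • ρ.E (k+4) w - (4:ℂ) • (lam^(k+3) • ρ.E (k+3) w)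
          + (6:ℂ) • (lam^(k+2) • ρ.E (k+2) w) - (4:ℂ) • (lam^(k+1) • ρ.E (k+1) w)
          + lam^k • ρ.E k w
          = ((Am (k+4) k (Am k 0 w) + (Am k 0 w + (Am (k+4) k w + w))
              - (3:ℂ) • (Am (k+3) (k+1) (Am (k+1) 0 w) + (Am (k+1) 0 w + (Am (k+3) (k+1) w + w)))
              + (3:ℂ) • (Am (k+2) (k+2) (Am (k+2) 0 w) + (Am (k+2) 0 w + (Am (k+2) (k+2) w + w)))
              - (Am (k+1) (k+3) (Am (k+3) 0 w) + (Am (k+3) 0 w + (Am (k+1) (k+3) w + w))))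
            - (Am (k+4) k (Am k 0 w) - (3:ℂ) • Am (k+3) (k+1) (Am (k+1) 0 w)
              + (3:ℂ) • Am (k+2) (k+2) (Am (k+2) 0 w) - Am (k+1) (k+3) (Am (k+3) 0 w))) := by
            simp only [hAm]
            match_scalars <;> push_cast <;> ring
        _ = 0 := hE
    -- Step 4 : strip λ^k
    have hJ : ∀ k : ℤ, ((max s0 s1 : ℕ):ℤ) ≤ k →
        lam^4 • ρ.E (k+4) w - (4*lam^3) • ρ.E (k+3) w + (6*lam^2) • ρ.E (k+2) w
          - (4*lam) • ρ.E (k+1) w + ρ.E k w = 0 := by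
      intro k hk
      have h := hrel k hk
      have hz : ∀ r : ℕ, lam^(-k) * lam^(k+(r:ℤ)) = lam^(r:ℕ) := by
        intro r
        rw [← zpow_add₀ hlam, ← zpow_natCast lam r]
        congr 1
        ring
      calc lam^4 • ρ.E (k+4) w - (4*lam^3) • ρ.E (k+3) w + (6*lam^2) • ρ.E (k+2) w
            - (4*lam) • ρ.E (k+1) w + ρ.E k w
          = lam^(-k) • (lam^(k+4) • ρ.E (k+4) w - (4:ℂ) • (lam^(k+3) • ρ.E (k+3) w)
            + (6:ℂ) • (lam^(k+2) • ρ.E (k+2) w) - (4:ℂ) • (lam^(k+1) • ρ.E (k+1) w)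
            + lam^k • ρ.E k w) := by
            match_scalars
            all_goals (try simp only [zpow_neg, zpow_add₀ hlam, zpow_ofNat]);
            all_goals (field_simp [zpow_ne_zero k hlam]); all_goals (try ring)
        _ = 0 := by rw [h, smul_zero]
    -- Step 5 : polynomial coefficients vanish
    obtain ⟨n, hn⟩ := hO w
    have hEs : ∀ k : ℤ, ρ.E k w = ∑ i ∈ Finset.range (n+1),
        (((k:ℂ)^i) / (Nat.factorial i : ℂ)) • ρ.d ((i:ℤ) - 1) w :=
      fun k => ρ.E_eq_sum k w n hn
    have hCt : ∀ t, t ≤ n → (∑ i ∈ Finset.range (n+1),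
        (((lam^4*4^(i-t) - 4*lam^3*3^(i-t) + 6*lam^2*2^(i-t) - 4*lam*1^(i-t) + (0:ℂ)^(i-t))
          * (Nat.choose i t : ℂ)) / (Nat.factorial i : ℂ)) • ρ.d ((i:ℤ) - 1) w) = 0 := by
      apply poly_vanish n _ ((max s0 s1 : ℕ):ℤ)
      intro k hk
      have hJk := hJ k hk
      rw [hEs (k+4), hEs (k+3), hEs (k+2), hEs (k+1), hEs k] at hJk
      push_cast at hJk
      exact (rearrange n (fun i => ρ.d ((i:ℤ) - 1) w) lam (k:ℂ)).symm.trans hJk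
    -- Step 6 : endgames
    have hbd : ∀ i : ℕ, n < i → ρ.d ((i:ℤ) - 1) w = 0 := fun i hi => hn _ (by omega)
    have hv4 : ∀ i : ℕ, 4 ≤ i → ρ.d ((i:ℤ) - 1) w = 0 := by
      rcases eq_or_ne lam 1 with h1 | h1
      · exact fun i _ => endgame_one n (fun i => ρ.d ((i:ℤ) - 1) w) lam h1 hbd hCt i ‹_›
      · intro i _
        exact endgame_ne n (fun i => ρ.d ((i:ℤ) - 1) w) lam h1 hbd hCt i
    intro j hj
    have hfin : ρ.d (((j+1).toNat : ℤ) - 1) w = 0 := hv4 (j+1).toNat (by omega)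
    rwa [show (((j+1).toNat : ℤ) - 1) = j by omega] at hfin
  -- Step 7 : cascade down and contradiction
  have hd3 : ∀ j : ℤ, 3 ≤ j → ρ.d j = 0 := fun j hj => LinearMap.ext fun w => main w j hj
  have key_dn : ∀ j : ℤ, -1 ≤ j → ρ.d (j+1) = 0 → ρ.d j = 0 := by
    intro j hj hnext
    have hcomm := ρ.comm (-1) (j+1) (by norm_num) (by omega)
    rw [hnext] at hcomm
    simp only [LinearMap.comp_zero, LinearMap.zero_comp, sub_zero, zero_sub, neg_eq_zero,
      sub_self] at hcomm
    rw [show (-1) + (j+1) = j by ring] at hcomm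
    have hc : (((j+1) - (-1) : ℤ) : ℂ) ≠ 0 := by
      rw [Int.cast_ne_zero]
      omega
    have hrw : ρ.d j = (((j+1) - (-1) : ℤ) : ℂ)⁻¹ • ((((j+1) - (-1) : ℤ) : ℂ) • ρ.d j) := by
      rw [smul_smul, inv_mul_cancel₀ hc, one_smul]
    rw [hrw, ← hcomm, smul_zero]
  have e3 : ρ.d ((2:ℤ)+1) = 0 := by
    rw [show (2:ℤ)+1 = 3 by norm_num]
    exact hd3 3 le_rfl
  have e2 : ρ.d 2 = 0 := key_dn 2 (by norm_num) e3
  have e2' : ρ.d ((1:ℤ)+1) = 0 := by rwa [show (1:ℤ)+1 = 2 by norm_num]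
  have e1 : ρ.d 1 = 0 := key_dn 1 (by norm_num) e2'
  have e1' : ρ.d ((0:ℤ)+1) = 0 := by rwa [show (0:ℤ)+1 = 1 by norm_num]
  have e0 : ρ.d 0 = 0 := key_dn 0 (by norm_num) e1'
  have e0' : ρ.d ((-1:ℤ)+1) = 0 := by rwa [show (-1:ℤ)+1 = 0 by norm_num]
  have em1 : ρ.d (-1) = 0 := key_dn (-1) (by norm_num) e0'
  apply hnt
  intro i hi
  rcases (by omega : i = -1 ∨ i = 0 ∨ i = 1 ∨ i = 2 ∨ 3 ≤ i) with rfl | rfl | rfl | rfl | h3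
  · exact em1
  · exact e0
  · exact e1
  · exact e2
  · exact hd3 i h3

end Part1Core
namespace WittRep

variable {W : Type*} [AddCommGroup W] [Module ℂ W]

lemma d0_dm1 (ρ : WittRep W) {w₀ : W} {b : ℂ} (hd0 : ρ.d 0 w₀ = b • w₀) :
    ρ.d 0 (ρ.d (-1) w₀) = (b-1) • ρ.d (-1) w₀ := by
  have hc := LinearMap.congr_fun (ρ.comm (-1) 0 (by norm_num) (by norm_num)) w₀
  simp only [LinearMap.sub_apply, LinearMap.comp_apply, LinearMap.smul_apply] at hc
  rw [hd0, map_smul] at hc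
  rw [show ((-1:ℤ)+0) = -1 by norm_num] at hc
  have : ρ.d 0 (ρ.d (-1) w₀) = b • ρ.d (-1) w₀ - ((0 - (-1) : ℤ):ℂ) • ρ.d (-1) w₀ := by
    rw [← hc]; abel
  rw [this]
  push_cast
  module

lemma d1_dm1 (ρ : WittRep W) {w₀ : W} {b : ℂ} (hd0 : ρ.d 0 w₀ = b • w₀)
    (hpos : ∀ i : ℤ, 1 ≤ i → ρ.d i w₀ = 0) :
    ρ.d 1 (ρ.d (-1) w₀) = (-2*b) • w₀ := by
  have hc := LinearMap.congr_fun (ρ.comm (-1) 1 (by norm_num) (by norm_num)) w₀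
  simp only [LinearMap.sub_apply, LinearMap.comp_apply, LinearMap.smul_apply] at hc
  rw [hpos 1 le_rfl, map_zero, show ((-1:ℤ)+1) = 0 by norm_num, hd0] at hc
  have : ρ.d 1 (ρ.d (-1) w₀) = (0:W) - ((1 - (-1) : ℤ):ℂ) • (b • w₀) := by
    rw [← hc]; abel
  rw [this]
  push_cast
  module

lemma dge2_dm1 (ρ : WittRep W) {w₀ : W} (hpos : ∀ i : ℤ, 1 ≤ i → ρ.d i w₀ = 0)
    (i : ℤ) (hi : 2 ≤ i) : ρ.d i (ρ.d (-1) w₀) = 0 := by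
  have hc := LinearMap.congr_fun (ρ.comm (-1) i (by norm_num) (by omega)) w₀
  simp only [LinearMap.sub_apply, LinearMap.comp_apply, LinearMap.smul_apply] at hc
  rw [hpos i (by omega), map_zero, hpos ((-1)+i) (by omega), smul_zero, zero_sub,
    neg_eq_zero] at hc
  exact hc

lemma dbound_span (ρ : WittRep W) {w₀ : W} {b : ℂ} (hd0 : ρ.d 0 w₀ = b • w₀)
    (hpos : ∀ i : ℤ, 1 ≤ i → ρ.d i w₀ = 0) (γ δ : ℂ) :
    ∀ i : ℤ, ((2:ℕ):ℤ) ≤ i → ρ.d i (γ • ρ.d (-1) w₀ + δ • w₀) = 0 := by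
  intro i hi
  have h2 : (2:ℤ) ≤ i := by exact_mod_cast hi
  rw [map_add, map_smul, map_smul, ρ.dge2_dm1 hpos i h2, hpos i (by omega),
    smul_zero, smul_zero, add_zero]

lemma E_span (ρ : WittRep W) {w₀ : W} {b : ℂ} (hd0 : ρ.d 0 w₀ = b • w₀)
    (hpos : ∀ i : ℤ, 1 ≤ i → ρ.d i w₀ = 0) (k : ℤ) (γ δ : ℂ) :
    ρ.E k (γ • ρ.d (-1) w₀ + δ • w₀)
      = γ • ρ.d (-1) (ρ.d (-1) w₀) + (δ + (k:ℂ)*γ*(b-1)) • ρ.d (-1) w₀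
          + ((k:ℂ)*δ*b - (k:ℂ)^2*γ*b) • w₀ := by
  rw [ρ.E_eq_sum k _ 2 (ρ.dbound_span hd0 hpos γ δ)]
  rw [Finset.sum_range_succ, Finset.sum_range_succ, Finset.sum_range_one]
  norm_num
  rw [ρ.d0_dm1 hd0, ρ.d1_dm1 hd0 hpos, hd0, hpos 1 le_rfl]
  match_scalars <;> ring

lemma Lact_eval_span (ρ : WittRep W) (a : ℂ) {w₀ : W} {b : ℂ} (hd0 : ρ.d 0 w₀ = b • w₀)
    (hpos : ∀ i : ℤ, 1 ≤ i → ρ.d i w₀ = 0) (k c : ℤ) (γ δ ε : ℂ)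
    (hε : ((-1:ℂ)) ^ k = ε) :
    ρ.Lact (-1) a (b+1) k (Finsupp.single c (γ • ρ.d (-1) w₀ + δ • w₀))
      = Finsupp.single (k + c)
          ((ε*γ - γ) • ρ.d (-1) (ρ.d (-1) w₀)
            + (ε*(δ + (k:ℂ)*γ*(b-1)) - δ + (a + (k:ℂ)*(b+1) + (c:ℂ))*γ) • ρ.d (-1) w₀
            + (ε*((k:ℂ)*δ*b - (k:ℂ)^2*γ*b) + (a + (k:ℂ)*(b+1) + (c:ℂ))*δ) • w₀) := by
  rw [ρ.Lact_single (-1) a (b+1) k c _, ρ.E_span hd0 hpos k γ δ]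
  congr 1
  rw [map_add, map_smul, map_smul, hε]
  match_scalars <;> ring

end WittRep
section Part23Core

variable {W V A : Type*} [AddCommGroup W] [Module ℂ W] [AddCommGroup V] [Module ℂ V]
  [AddCommGroup A] [Module ℂ A]

lemma part23core (ρ : WittRep W) (a b : ℂ) (w₀ : W) (hw : ρ.IsHW w₀ b) (hb : b ≠ 0)
    (τ : VirasoroRep V) (σ : VirasoroRep A)
    (hQ : ∀ u : TensorProduct ℂ V A, ∃ s : ℕ, ∀ m p : ℤ, (s:ℤ) ≤ m → (s:ℤ) ≤ p →
      tensD τ σ (p+3) (tensD τ σ m u) - (3:ℂ) • tensD τ σ (p+2) (tensD τ σ (m+1) u)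
        + (3:ℂ) • tensD τ σ (p+1) (tensD τ σ (m+2) u) - tensD τ σ p (tensD τ σ (m+3) u) = 0)
    (L : Submodule ℂ (ℤ →₀ W)) (r : ℤ)
    (hgen : ∀ (i : ℕ) (j : ℤ), (ρ.Lact (-1) a (b + 1) 1)^[i] (Finsupp.single (2*j+r) w₀) ∈ L)
    (Sx : Submodule ℂ (TensorProduct ℂ V A)) (φ : ↥L ≃ₗ[ℂ] ↥Sx)
    (hφ : ∀ (m : ℤ) (u : ↥L) (hu : ρ.Lact (-1) a (b+1) m ↑u ∈ L),
      (↑(φ ⟨ρ.Lact (-1) a (b+1) m ↑u, hu⟩) : TensorProduct ℂ V A) = tensD τ σ m ↑(φ u)) :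
    False := by
  classical
  obtain ⟨hw0, hd0, hpos⟩ := hw
  -- abbreviations
  have hm1 : ((-1:ℂ)) ≠ 0 := by norm_num
  have hparE : ∀ u t : ℤ, u = 2*t → ((-1:ℂ)) ^ u = 1 := by
    intro u t hu
    rw [hu, zpow_mul]
    norm_num
  have hparO : ∀ u t : ℤ, u = 2*t+1 → ((-1:ℂ)) ^ u = -1 := by
    intro u t hu
    rw [hu, zpow_add₀ hm1, zpow_mul]
    norm_num
  have hsw : ∀ c : ℤ, (Finsupp.single c w₀ : ℤ →₀ W)
      = Finsupp.single c ((0:ℂ) • ρ.d (-1) w₀ + (1:ℂ) • w₀) := by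
    intro c
    congr 1
    module
  -- membership lemmas
  have M0 : ∀ (c : ℤ) (δ : ℂ), (∃ j : ℤ, c = 2*j+r) →
      Finsupp.single c (δ • w₀) ∈ L := by
    rintro c δ ⟨j, rfl⟩
    have h := hgen 0 j
    rw [Function.iterate_zero, id] at h
    rw [← Finsupp.smul_single]
    exact L.smul_mem δ h
  have M1 : ∀ (c : ℤ), (∃ j : ℤ, c = 2*j+r+1) →
      Finsupp.single c ((-2:ℂ) • ρ.d (-1) w₀ + (a + (c:ℂ)) • w₀) ∈ L := by
    rintro c ⟨j, rfl⟩
    have h := hgen 1 j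
    rw [Function.iterate_one, hsw (2*j+r),
      ρ.Lact_eval_span a hd0 hpos 1 (2*j+r) 0 1 (-1) (by norm_num)] at h
    have e : (Finsupp.single (2*j+r+1)
          ((-2:ℂ) • ρ.d (-1) w₀ + (a + ((2*j+r+1 : ℤ):ℂ)) • w₀) : ℤ →₀ W)
        = Finsupp.single (1+(2*j+r))
          (((-1)*(0:ℂ) - 0) • ρ.d (-1) (ρ.d (-1) w₀)
            + ((-1)*((1:ℂ) + ((1:ℤ):ℂ)*0*(b-1)) - 1 + (a + ((1:ℤ):ℂ)*(b+1) + ((2*j+r:ℤ):ℂ))*0) • ρ.d (-1) w₀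
            + ((-1)*(((1:ℤ):ℂ)*1*b - ((1:ℤ):ℂ)^2*0*b) + (a + ((1:ℤ):ℂ)*(b+1) + ((2*j+r:ℤ):ℂ))*1) • w₀) := by
      rw [show (2*j+r+1) = 1+(2*j+r) by ring]
      congr 1
      match_scalars <;> (push_cast; ring)
    rw [e]
    exact h
  have M2 : ∀ (c : ℤ), (∃ j : ℤ, c = 2*j+r) →
      Finsupp.single c ((4:ℂ) • ρ.d (-1) (ρ.d (-1) w₀) + (-4*(a + (c:ℂ))) • ρ.d (-1) w₀
        + ((a + (c:ℂ) - 1)*(a + (c:ℂ)) - 2*b) • w₀) ∈ L := by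
    rintro c ⟨j, rfl⟩
    have h := hgen 2 (j-1)
    rw [show (2:ℕ) = 1+1 from rfl, Function.iterate_succ_apply', Function.iterate_one,
      hsw (2*(j-1)+r),
      ρ.Lact_eval_span a hd0 hpos 1 (2*(j-1)+r) 0 1 (-1) (by norm_num)] at h
    -- normalize inner vector to canonical span form
    have e1 : (Finsupp.single (1+(2*(j-1)+r))
          (((-1)*(0:ℂ) - 0) • ρ.d (-1) (ρ.d (-1) w₀)
            + ((-1)*((1:ℂ) + ((1:ℤ):ℂ)*0*(b-1)) - 1 + (a + ((1:ℤ):ℂ)*(b+1) + ((2*(j-1)+r:ℤ):ℂ))*0) • ρ.d (-1) w₀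
            + ((-1)*(((1:ℤ):ℂ)*1*b - ((1:ℤ):ℂ)^2*0*b) + (a + ((1:ℤ):ℂ)*(b+1) + ((2*(j-1)+r:ℤ):ℂ))*1) • w₀) : ℤ →₀ W)
        = Finsupp.single (1+(2*(j-1)+r))
          ((-2:ℂ) • ρ.d (-1) w₀ + (a + ((1+(2*(j-1)+r) : ℤ):ℂ)) • w₀) := by
      congr 1
      match_scalars <;> (push_cast; ring)
    rw [e1, ρ.Lact_eval_span a hd0 hpos 1 (1+(2*(j-1)+r)) (-2) (a + ((1+(2*(j-1)+r) : ℤ):ℂ)) (-1) (by norm_num)] at h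
    have e2 : (Finsupp.single (2*j+r)
          ((4:ℂ) • ρ.d (-1) (ρ.d (-1) w₀) + (-4*(a + ((2*j+r:ℤ):ℂ))) • ρ.d (-1) w₀
            + ((a + ((2*j+r:ℤ):ℂ) - 1)*(a + ((2*j+r:ℤ):ℂ)) - 2*b) • w₀) : ℤ →₀ W)
        = Finsupp.single (1+(1+(2*(j-1)+r)))
          (((-1)*(-2:ℂ) - (-2)) • ρ.d (-1) (ρ.d (-1) w₀)
            + ((-1)*((a + ((1+(2*(j-1)+r) : ℤ):ℂ)) + ((1:ℤ):ℂ)*(-2)*(b-1)) - (a + ((1+(2*(j-1)+r) : ℤ):ℂ))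
                + (a + ((1:ℤ):ℂ)*(b+1) + ((1+(2*(j-1)+r):ℤ):ℂ))*(-2)) • ρ.d (-1) w₀
            + ((-1)*(((1:ℤ):ℂ)*(a + ((1+(2*(j-1)+r) : ℤ):ℂ))*b - ((1:ℤ):ℂ)^2*(-2)*b)
                + (a + ((1:ℤ):ℂ)*(b+1) + ((1+(2*(j-1)+r):ℤ):ℂ))*(a + ((1+(2*(j-1)+r) : ℤ):ℂ))) • w₀) := by
      rw [show (2*j+r) = 1+(1+(2*(j-1)+r)) by ring]
      congr 1
      match_scalars <;> (push_cast; ring)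
    rw [e2]
    exact h
  -- the base vector
  have hf : Finsupp.single r w₀ ∈ L := by
    have h := hgen 0 0
    rw [Function.iterate_zero, id] at h
    rwa [show 2*(0:ℤ)+r = r by ring] at h
  set u0 : ↥L := ⟨Finsupp.single r w₀, hf⟩ with hu0def
  obtain ⟨s, hs⟩ := hQ (↑(φ u0))
  set M : ℤ := 2*(s:ℤ)+2 with hM
  -- inner evaluations
  have εM : ((-1:ℂ)) ^ M = 1 := hparE M ((s:ℤ)+1) (by rw [hM]; ring)
  have εM1 : ((-1:ℂ)) ^ (M+1) = -1 := hparO (M+1) ((s:ℤ)+1) (by rw [hM]; ring)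
  have εM2 : ((-1:ℂ)) ^ (M+2) = 1 := hparE (M+2) ((s:ℤ)+2) (by rw [hM]; ring)
  have εM3 : ((-1:ℂ)) ^ (M+3) = -1 := hparO (M+3) ((s:ℤ)+2) (by rw [hM]; ring)
  have hIn0 : ρ.Lact (-1) a (b+1) M (Finsupp.single r w₀)
      = Finsupp.single (M+r) ((0:ℂ) • ρ.d (-1) w₀ + (a + (M:ℂ)*(2*b+1) + (r:ℂ)) • w₀) := by
    rw [hsw r, ρ.Lact_eval_span a hd0 hpos M r 0 1 1 εM]
    congr 1
    match_scalars <;> (push_cast; ring)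
  have hIn1 : ρ.Lact (-1) a (b+1) (M+1) (Finsupp.single r w₀)
      = Finsupp.single ((M+1)+r) ((-2:ℂ) • ρ.d (-1) w₀ + (a + (M:ℂ) + 1 + (r:ℂ)) • w₀) := by
    rw [hsw r, ρ.Lact_eval_span a hd0 hpos (M+1) r 0 1 (-1) εM1]
    congr 1
    match_scalars <;> (push_cast; ring)
  have hIn2 : ρ.Lact (-1) a (b+1) (M+2) (Finsupp.single r w₀)
      = Finsupp.single ((M+2)+r) ((0:ℂ) • ρ.d (-1) w₀ + (a + ((M:ℂ)+2)*(2*b+1) + (r:ℂ)) • w₀) := by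
    rw [hsw r, ρ.Lact_eval_span a hd0 hpos (M+2) r 0 1 1 εM2]
    congr 1
    match_scalars <;> (push_cast; ring)
  have hIn3 : ρ.Lact (-1) a (b+1) (M+3) (Finsupp.single r w₀)
      = Finsupp.single ((M+3)+r) ((-2:ℂ) • ρ.d (-1) w₀ + (a + (M:ℂ) + 3 + (r:ℂ)) • w₀) := by
    rw [hsw r, ρ.Lact_eval_span a hd0 hpos (M+3) r 0 1 (-1) εM3]
    congr 1
    match_scalars <;> (push_cast; ring)
  -- inner memberships
  have Min0 : ρ.Lact (-1) a (b+1) M ↑u0 ∈ L := by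
    show ρ.Lact (-1) a (b+1) M (Finsupp.single r w₀) ∈ L
    rw [hIn0, show ((0:ℂ) • ρ.d (-1) w₀ + (a + (M:ℂ)*(2*b+1) + (r:ℂ)) • w₀)
      = (a + (M:ℂ)*(2*b+1) + (r:ℂ)) • w₀ by module]
    exact M0 (M+r) _ ⟨(s:ℤ)+1, by rw [hM]; ring⟩
  have Min1 : ρ.Lact (-1) a (b+1) (M+1) ↑u0 ∈ L := by
    show ρ.Lact (-1) a (b+1) (M+1) (Finsupp.single r w₀) ∈ L
    rw [hIn1, show (Finsupp.single ((M+1)+r) ((-2:ℂ) • ρ.d (-1) w₀ + (a + (M:ℂ) + 1 + (r:ℂ)) • w₀) : ℤ →₀ W)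
      = Finsupp.single ((M+1)+r) ((-2:ℂ) • ρ.d (-1) w₀ + (a + ((M+1+r : ℤ):ℂ)) • w₀) by
        congr 1; match_scalars <;> (push_cast; ring)]
    exact M1 (M+1+r) ⟨(s:ℤ)+1, by rw [hM]; ring⟩
  have Min2 : ρ.Lact (-1) a (b+1) (M+2) ↑u0 ∈ L := by
    show ρ.Lact (-1) a (b+1) (M+2) (Finsupp.single r w₀) ∈ L
    rw [hIn2, show ((0:ℂ) • ρ.d (-1) w₀ + (a + ((M:ℂ)+2)*(2*b+1) + (r:ℂ)) • w₀)
      = (a + ((M:ℂ)+2)*(2*b+1) + (r:ℂ)) • w₀ by module]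
    exact M0 ((M+2)+r) _ ⟨(s:ℤ)+2, by rw [hM]; ring⟩
  have Min3 : ρ.Lact (-1) a (b+1) (M+3) ↑u0 ∈ L := by
    show ρ.Lact (-1) a (b+1) (M+3) (Finsupp.single r w₀) ∈ L
    rw [hIn3, show (Finsupp.single ((M+3)+r) ((-2:ℂ) • ρ.d (-1) w₀ + (a + (M:ℂ) + 3 + (r:ℂ)) • w₀) : ℤ →₀ W)
      = Finsupp.single ((M+3)+r) ((-2:ℂ) • ρ.d (-1) w₀ + (a + ((M+3+r : ℤ):ℂ)) • w₀) by
        congr 1; match_scalars <;> (push_cast; ring)]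
    exact M1 (M+3+r) ⟨(s:ℤ)+2, by rw [hM]; ring⟩
  -- the key coefficient identity, for odd p ≥ s
  have derive : ∀ p t : ℤ, (s:ℤ) ≤ p → p = 2*t+1 →
      (-16:ℂ) • ρ.d (-1) (ρ.d (-1) w₀)
        + (16*(a + ((M:ℂ) + (p:ℂ) + 3 + (r:ℂ)))) • ρ.d (-1) w₀
        + ( (((p:ℂ)+3)*(a + (M:ℂ)*(2*b+1) + (r:ℂ))*b
              + (a + ((p:ℂ)+3)*(b+1) + (M:ℂ) + (r:ℂ))*(a + (M:ℂ)*(2*b+1) + (r:ℂ)))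
          - 3*((a + (M:ℂ)+1+(r:ℂ))*(a + (M:ℂ)+(p:ℂ)+3+(r:ℂ)) - 2*((p:ℂ)+2)^2*b)
          + 3*( (((p:ℂ)+1)*(a + ((M:ℂ)+2)*(2*b+1) + (r:ℂ))*b
              + (a + ((p:ℂ)+1)*(b+1) + (M:ℂ)+2+(r:ℂ))*(a + ((M:ℂ)+2)*(2*b+1) + (r:ℂ))))
          - ((a + (M:ℂ)+3+(r:ℂ))*(a + (M:ℂ)+(p:ℂ)+3+(r:ℂ)) - 2*(p:ℂ)^2*b) ) • w₀ = 0 := by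
    intro p t hp hpt
    have εp3 : ((-1:ℂ)) ^ (p+3) = 1 := hparE (p+3) (t+2) (by omega)
    have εp2 : ((-1:ℂ)) ^ (p+2) = -1 := hparO (p+2) (t+1) (by omega)
    have εp1 : ((-1:ℂ)) ^ (p+1) = 1 := hparE (p+1) (t+1) (by omega)
    have εp : ((-1:ℂ)) ^ p = -1 := hparO p t hpt
    -- outer evaluations
    have hT0 : ρ.Lact (-1) a (b+1) (p+3) (ρ.Lact (-1) a (b+1) M (Finsupp.single r w₀))
        = Finsupp.single ((p+3)+(M+r))
          (((1:ℂ)*0 - 0) • ρ.d (-1) (ρ.d (-1) w₀)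
            + ((1:ℂ)*((a + (M:ℂ)*(2*b+1) + (r:ℂ)) + ((p+3:ℤ):ℂ)*0*(b-1)) - (a + (M:ℂ)*(2*b+1) + (r:ℂ))
                + (a + ((p+3:ℤ):ℂ)*(b+1) + ((M+r:ℤ):ℂ))*0) • ρ.d (-1) w₀
            + ((1:ℂ)*(((p+3:ℤ):ℂ)*(a + (M:ℂ)*(2*b+1) + (r:ℂ))*b - ((p+3:ℤ):ℂ)^2*0*b)
                + (a + ((p+3:ℤ):ℂ)*(b+1) + ((M+r:ℤ):ℂ))*(a + (M:ℂ)*(2*b+1) + (r:ℂ))) • w₀) := by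
      rw [hIn0, ρ.Lact_eval_span a hd0 hpos (p+3) (M+r) 0 (a + (M:ℂ)*(2*b+1) + (r:ℂ)) 1 εp3]
    have hT1 : ρ.Lact (-1) a (b+1) (p+2) (ρ.Lact (-1) a (b+1) (M+1) (Finsupp.single r w₀))
        = Finsupp.single ((p+2)+((M+1)+r))
          (((-1:ℂ)*(-2) - (-2)) • ρ.d (-1) (ρ.d (-1) w₀)
            + ((-1:ℂ)*((a + (M:ℂ) + 1 + (r:ℂ)) + ((p+2:ℤ):ℂ)*(-2)*(b-1)) - (a + (M:ℂ) + 1 + (r:ℂ))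
                + (a + ((p+2:ℤ):ℂ)*(b+1) + (((M+1)+r:ℤ):ℂ))*(-2)) • ρ.d (-1) w₀
            + ((-1:ℂ)*(((p+2:ℤ):ℂ)*(a + (M:ℂ) + 1 + (r:ℂ))*b - ((p+2:ℤ):ℂ)^2*(-2)*b)
                + (a + ((p+2:ℤ):ℂ)*(b+1) + (((M+1)+r:ℤ):ℂ))*(a + (M:ℂ) + 1 + (r:ℂ))) • w₀) := by
      rw [hIn1, ρ.Lact_eval_span a hd0 hpos (p+2) ((M+1)+r) (-2) (a + (M:ℂ) + 1 + (r:ℂ)) (-1) εp2]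
    have hT2 : ρ.Lact (-1) a (b+1) (p+1) (ρ.Lact (-1) a (b+1) (M+2) (Finsupp.single r w₀))
        = Finsupp.single ((p+1)+((M+2)+r))
          (((1:ℂ)*0 - 0) • ρ.d (-1) (ρ.d (-1) w₀)
            + ((1:ℂ)*((a + ((M:ℂ)+2)*(2*b+1) + (r:ℂ)) + ((p+1:ℤ):ℂ)*0*(b-1)) - (a + ((M:ℂ)+2)*(2*b+1) + (r:ℂ))
                + (a + ((p+1:ℤ):ℂ)*(b+1) + (((M+2)+r:ℤ):ℂ))*0) • ρ.d (-1) w₀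
            + ((1:ℂ)*(((p+1:ℤ):ℂ)*(a + ((M:ℂ)+2)*(2*b+1) + (r:ℂ))*b - ((p+1:ℤ):ℂ)^2*0*b)
                + (a + ((p+1:ℤ):ℂ)*(b+1) + (((M+2)+r:ℤ):ℂ))*(a + ((M:ℂ)+2)*(2*b+1) + (r:ℂ))) • w₀) := by
      rw [hIn2, ρ.Lact_eval_span a hd0 hpos (p+1) ((M+2)+r) 0 (a + ((M:ℂ)+2)*(2*b+1) + (r:ℂ)) 1 εp1]
    have hT3 : ρ.Lact (-1) a (b+1) p (ρ.Lact (-1) a (b+1) (M+3) (Finsupp.single r w₀))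
        = Finsupp.single (p+((M+3)+r))
          (((-1:ℂ)*(-2) - (-2)) • ρ.d (-1) (ρ.d (-1) w₀)
            + ((-1:ℂ)*((a + (M:ℂ) + 3 + (r:ℂ)) + ((p:ℤ):ℂ)*(-2)*(b-1)) - (a + (M:ℂ) + 3 + (r:ℂ))
                + (a + ((p:ℤ):ℂ)*(b+1) + (((M+3)+r:ℤ):ℂ))*(-2)) • ρ.d (-1) w₀
            + ((-1:ℂ)*(((p:ℤ):ℂ)*(a + (M:ℂ) + 3 + (r:ℂ))*b - ((p:ℤ):ℂ)^2*(-2)*b)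
                + (a + ((p:ℤ):ℂ)*(b+1) + (((M+3)+r:ℤ):ℂ))*(a + (M:ℂ) + 3 + (r:ℂ))) • w₀) := by
      rw [hIn3, ρ.Lact_eval_span a hd0 hpos p ((M+3)+r) (-2) (a + (M:ℂ) + 3 + (r:ℂ)) (-1) εp]
    -- outer memberships
    have hu2_0 : ρ.Lact (-1) a (b+1) (p+3) (ρ.Lact (-1) a (b+1) M ↑u0) ∈ L := by
      show ρ.Lact (-1) a (b+1) (p+3) (ρ.Lact (-1) a (b+1) M (Finsupp.single r w₀)) ∈ L
      rw [hT0]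
      rw [show (((1:ℂ)*0 - 0) • ρ.d (-1) (ρ.d (-1) w₀)
            + ((1:ℂ)*((a + (M:ℂ)*(2*b+1) + (r:ℂ)) + ((p+3:ℤ):ℂ)*0*(b-1)) - (a + (M:ℂ)*(2*b+1) + (r:ℂ))
                + (a + ((p+3:ℤ):ℂ)*(b+1) + ((M+r:ℤ):ℂ))*0) • ρ.d (-1) w₀
            + ((1:ℂ)*(((p+3:ℤ):ℂ)*(a + (M:ℂ)*(2*b+1) + (r:ℂ))*b - ((p+3:ℤ):ℂ)^2*0*b)
                + (a + ((p+3:ℤ):ℂ)*(b+1) + ((M+r:ℤ):ℂ))*(a + (M:ℂ)*(2*b+1) + (r:ℂ))) • w₀)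
          = ((1:ℂ)*(((p+3:ℤ):ℂ)*(a + (M:ℂ)*(2*b+1) + (r:ℂ))*b - ((p+3:ℤ):ℂ)^2*0*b)
                + (a + ((p+3:ℤ):ℂ)*(b+1) + ((M+r:ℤ):ℂ))*(a + (M:ℂ)*(2*b+1) + (r:ℂ))) • w₀ by
        match_scalars <;> (push_cast; ring)]
      exact M0 ((p+3)+(M+r)) _ ⟨t+(s:ℤ)+3, by rw [hM]; omega⟩
    have hu2_2 : ρ.Lact (-1) a (b+1) (p+1) (ρ.Lact (-1) a (b+1) (M+2) ↑u0) ∈ L := by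
      show ρ.Lact (-1) a (b+1) (p+1) (ρ.Lact (-1) a (b+1) (M+2) (Finsupp.single r w₀)) ∈ L
      rw [hT2]
      rw [show (((1:ℂ)*0 - 0) • ρ.d (-1) (ρ.d (-1) w₀)
            + ((1:ℂ)*((a + ((M:ℂ)+2)*(2*b+1) + (r:ℂ)) + ((p+1:ℤ):ℂ)*0*(b-1)) - (a + ((M:ℂ)+2)*(2*b+1) + (r:ℂ))
                + (a + ((p+1:ℤ):ℂ)*(b+1) + (((M+2)+r:ℤ):ℂ))*0) • ρ.d (-1) w₀
            + ((1:ℂ)*(((p+1:ℤ):ℂ)*(a + ((M:ℂ)+2)*(2*b+1) + (r:ℂ))*b - ((p+1:ℤ):ℂ)^2*0*b)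
                + (a + ((p+1:ℤ):ℂ)*(b+1) + (((M+2)+r:ℤ):ℂ))*(a + ((M:ℂ)+2)*(2*b+1) + (r:ℂ))) • w₀)
          = ((1:ℂ)*(((p+1:ℤ):ℂ)*(a + ((M:ℂ)+2)*(2*b+1) + (r:ℂ))*b - ((p+1:ℤ):ℂ)^2*0*b)
                + (a + ((p+1:ℤ):ℂ)*(b+1) + (((M+2)+r:ℤ):ℂ))*(a + ((M:ℂ)+2)*(2*b+1) + (r:ℂ))) • w₀ by
        match_scalars <;> (push_cast; ring)]
      exact M0 ((p+1)+((M+2)+r)) _ ⟨t+(s:ℤ)+3, by rw [hM]; omega⟩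
    have hu2_1 : ρ.Lact (-1) a (b+1) (p+2) (ρ.Lact (-1) a (b+1) (M+1) ↑u0) ∈ L := by
      show ρ.Lact (-1) a (b+1) (p+2) (ρ.Lact (-1) a (b+1) (M+1) (Finsupp.single r w₀)) ∈ L
      rw [hT1]
      have hsplit : (Finsupp.single ((p+2)+((M+1)+r))
          (((-1:ℂ)*(-2) - (-2)) • ρ.d (-1) (ρ.d (-1) w₀)
            + ((-1:ℂ)*((a + (M:ℂ) + 1 + (r:ℂ)) + ((p+2:ℤ):ℂ)*(-2)*(b-1)) - (a + (M:ℂ) + 1 + (r:ℂ))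
                + (a + ((p+2:ℤ):ℂ)*(b+1) + (((M+1)+r:ℤ):ℂ))*(-2)) • ρ.d (-1) w₀
            + ((-1:ℂ)*(((p+2:ℤ):ℂ)*(a + (M:ℂ) + 1 + (r:ℂ))*b - ((p+2:ℤ):ℂ)^2*(-2)*b)
                + (a + ((p+2:ℤ):ℂ)*(b+1) + (((M+1)+r:ℤ):ℂ))*(a + (M:ℂ) + 1 + (r:ℂ))) • w₀) : ℤ →₀ W)
          = Finsupp.single ((p+2)+((M+1)+r))
              ((4:ℂ) • ρ.d (-1) (ρ.d (-1) w₀)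
                + (-4*(a + (((p+2)+((M+1)+r) : ℤ):ℂ))) • ρ.d (-1) w₀
                + ((a + (((p+2)+((M+1)+r) : ℤ):ℂ) - 1)*(a + (((p+2)+((M+1)+r) : ℤ):ℂ)) - 2*b) • w₀)
            + Finsupp.single ((p+2)+((M+1)+r))
              (((-1:ℂ)*(((p+2:ℤ):ℂ)*(a + (M:ℂ) + 1 + (r:ℂ))*b - ((p+2:ℤ):ℂ)^2*(-2)*b)
                + (a + ((p+2:ℤ):ℂ)*(b+1) + (((M+1)+r:ℤ):ℂ))*(a + (M:ℂ) + 1 + (r:ℂ))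
                - ((a + (((p+2)+((M+1)+r) : ℤ):ℂ) - 1)*(a + (((p+2)+((M+1)+r) : ℤ):ℂ)) - 2*b)) • w₀) := by
        rw [← Finsupp.single_add]
        congr 1
        match_scalars <;> (push_cast; ring)
      rw [hsplit]
      exact L.add_mem (M2 ((p+2)+((M+1)+r)) ⟨t+(s:ℤ)+3, by rw [hM]; omega⟩)
        (M0 ((p+2)+((M+1)+r)) _ ⟨t+(s:ℤ)+3, by rw [hM]; omega⟩)
    have hu2_3 : ρ.Lact (-1) a (b+1) p (ρ.Lact (-1) a (b+1) (M+3) ↑u0) ∈ L := by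
      show ρ.Lact (-1) a (b+1) p (ρ.Lact (-1) a (b+1) (M+3) (Finsupp.single r w₀)) ∈ L
      rw [hT3]
      have hsplit : (Finsupp.single (p+((M+3)+r))
          (((-1:ℂ)*(-2) - (-2)) • ρ.d (-1) (ρ.d (-1) w₀)
            + ((-1:ℂ)*((a + (M:ℂ) + 3 + (r:ℂ)) + ((p:ℤ):ℂ)*(-2)*(b-1)) - (a + (M:ℂ) + 3 + (r:ℂ))
                + (a + ((p:ℤ):ℂ)*(b+1) + (((M+3)+r:ℤ):ℂ))*(-2)) • ρ.d (-1) w₀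
            + ((-1:ℂ)*(((p:ℤ):ℂ)*(a + (M:ℂ) + 3 + (r:ℂ))*b - ((p:ℤ):ℂ)^2*(-2)*b)
                + (a + ((p:ℤ):ℂ)*(b+1) + (((M+3)+r:ℤ):ℂ))*(a + (M:ℂ) + 3 + (r:ℂ))) • w₀) : ℤ →₀ W)
          = Finsupp.single (p+((M+3)+r))
              ((4:ℂ) • ρ.d (-1) (ρ.d (-1) w₀)
                + (-4*(a + ((p+((M+3)+r) : ℤ):ℂ))) • ρ.d (-1) w₀
                + ((a + ((p+((M+3)+r) : ℤ):ℂ) - 1)*(a + ((p+((M+3)+r) : ℤ):ℂ)) - 2*b) • w₀)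
            + Finsupp.single (p+((M+3)+r))
              (((-1:ℂ)*(((p:ℤ):ℂ)*(a + (M:ℂ) + 3 + (r:ℂ))*b - ((p:ℤ):ℂ)^2*(-2)*b)
                + (a + ((p:ℤ):ℂ)*(b+1) + (((M+3)+r:ℤ):ℂ))*(a + (M:ℂ) + 3 + (r:ℂ))
                - ((a + ((p+((M+3)+r) : ℤ):ℂ) - 1)*(a + ((p+((M+3)+r) : ℤ):ℂ)) - 2*b)) • w₀) := by
        rw [← Finsupp.single_add]
        congr 1
        match_scalars <;> (push_cast; ring)
      rw [hsplit]
      exact L.add_mem (M2 (p+((M+3)+r)) ⟨t+(s:ℤ)+3, by rw [hM]; omega⟩)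
        (M0 (p+((M+3)+r)) _ ⟨t+(s:ℤ)+3, by rw [hM]; omega⟩)
    -- transfer through φ
    have hu2_0' : ρ.Lact (-1) a (b+1) (p+3) ↑(⟨ρ.Lact (-1) a (b+1) M ↑u0, Min0⟩ : ↥L) ∈ L := hu2_0
    have hu2_1' : ρ.Lact (-1) a (b+1) (p+2) ↑(⟨ρ.Lact (-1) a (b+1) (M+1) ↑u0, Min1⟩ : ↥L) ∈ L := hu2_1
    have hu2_2' : ρ.Lact (-1) a (b+1) (p+1) ↑(⟨ρ.Lact (-1) a (b+1) (M+2) ↑u0, Min2⟩ : ↥L) ∈ L := hu2_2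
    have hu2_3' : ρ.Lact (-1) a (b+1) p ↑(⟨ρ.Lact (-1) a (b+1) (M+3) ↑u0, Min3⟩ : ↥L) ∈ L := hu2_3
    have q0a := hφ M u0 Min0
    have q1a := hφ (M+1) u0 Min1
    have q2a := hφ (M+2) u0 Min2
    have q3a := hφ (M+3) u0 Min3
    have q0b := hφ (p+3) ⟨ρ.Lact (-1) a (b+1) M ↑u0, Min0⟩ hu2_0'
    have q1b := hφ (p+2) ⟨ρ.Lact (-1) a (b+1) (M+1) ↑u0, Min1⟩ hu2_1'
    have q2b := hφ (p+1) ⟨ρ.Lact (-1) a (b+1) (M+2) ↑u0, Min2⟩ hu2_2'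
    have q3b := hφ p ⟨ρ.Lact (-1) a (b+1) (M+3) ↑u0, Min3⟩ hu2_3'
    have h0 := hs M p (by omega) hp
    have hφZ : (↑(φ ((⟨_, hu2_0'⟩ : ↥L) - (3:ℂ) • (⟨_, hu2_1'⟩ : ↥L)
        + (3:ℂ) • (⟨_, hu2_2'⟩ : ↥L) - (⟨_, hu2_3'⟩ : ↥L))) : TensorProduct ℂ V A) = 0 := by
      simp only [map_sub, map_add, map_smul, AddSubgroupClass.coe_sub, Submodule.coe_add,
        SetLike.val_smul]
      rw [q0b, q1b, q2b, q3b, q0a, q1a, q2a, q3a]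
      exact h0
    have hZ0 := φ.map_eq_zero_iff.mp ((ZeroMemClass.coe_eq_zero).mp hφZ)
    have hval := congrArg (Subtype.val) hZ0
    simp only [hu0def, AddSubgroupClass.coe_sub, Submodule.coe_add, SetLike.val_smul,
      ZeroMemClass.coe_zero] at hval
    rw [hT0, hT1, hT2, hT3,
      show (p+2)+((M+1)+r) = (p+3)+(M+r) by ring,
      show (p+1)+((M+2)+r) = (p+3)+(M+r) by ring,
      show p+((M+3)+r) = (p+3)+(M+r) by ring,
      Finsupp.smul_single, Finsupp.smul_single,
      ← Finsupp.single_sub, ← Finsupp.single_add, ← Finsupp.single_sub] at hval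
    have hC := Finsupp.single_eq_zero.mp hval
    refine Eq.trans ?_ hC
    match_scalars <;> (push_cast; ring)
  -- instantiate at two odd values of p and subtract
  have hC1 := derive (2*(s:ℤ)+1) (s:ℤ) (by omega) (by ring)
  have hC2 := derive (2*(s:ℤ)+3) ((s:ℤ)+1) (by omega) (by ring)
  have hF := congrArg₂ (fun (x y : W) => x - y) hC2 hC1
  simp only [sub_zero] at hF
  have hF2 := congrArg (ρ.d 1) hF
  rw [map_zero] at hF2
  simp only [map_sub, map_add, map_smul] at hF2
  rw [ρ.d1_dm1 hd0 hpos, hpos 1 le_rfl] at hF2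
  have hww : ((-64:ℂ)*b) • w₀ = 0 := by
    rw [← hF2]
    match_scalars <;> (push_cast; ring)
  have h64 : ((-64:ℂ)*b) ≠ 0 := mul_ne_zero (by norm_num) hb
  exact hw0 ((smul_eq_zero.mp hww).resolve_left h64)

end Part23Core
theorem stmt19 {W V A : Type*} [AddCommGroup W] [Module ℂ W]
    [AddCommGroup V] [Module ℂ V] [AddCommGroup A] [Module ℂ A]
    (ρ : WittRep W) (hO : ρ.InO) (hnt : ¬ ρ.IsTrivial) (hsW : ρ.IsSimple)
    (lam a b cz h a₁ b₁ : ℂ) (hlam : lam ≠ 0)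
    -- V(ċ, h): a simple highest weight Virasoro module with central charge ċ = cz
    (τ : VirasoroRep V) (hτs : τ.IsSimple) (v₁ : V) (hv₁ : v₁ ≠ 0)
    (hz : ∀ u : V, τ.z u = cz • u) (hd0 : τ.d 0 v₁ = h • v₁)
    (hdi : ∀ i : ℤ, 1 ≤ i → τ.d i v₁ = 0)
    -- A'_{a₁,b₁}: the (nontrivial simple subquotient of the) intermediate series module
    (σ : VirasoroRep A) (hσs : σ.IsSimple) (hσnt : ¬ ∀ m : ℤ, σ.d m = 0)
    (hσz : σ.z = 0) (vA : ℤ → A) (hspan : Submodule.span ℂ (Set.range vA) = ⊤)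
    (hAct : ∀ m n : ℤ, σ.d m (vA n) = (a₁ + (n : ℂ) + b₁ * (m : ℂ)) • vA (n + m)) :
    -- (1) L(W, λ, a, b), when simple, is not isomorphic to a simple submodule of V(ċ,h) ⊗ A'
    (ActSimple (ρ.Lact lam a b) →
      ∀ S : Submodule ℂ (TensorProduct ℂ V A), SimpleTensSub τ σ S →
        ¬ ∃ φ : (ℤ →₀ W) ≃ₗ[ℂ] ↥S,
          ∀ (m : ℤ) (f : ℤ →₀ W),
            (↑(φ (ρ.Lact lam a b m f)) : TensorProduct ℂ V A) = tensD τ σ m ↑(φ f)) ∧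
    -- (2) L₀(a, b), when simple, is not isomorphic to a simple submodule of V(ċ,h) ⊗ A'
    (∀ w₀ : W, ρ.IsHW w₀ b → b ≠ 0 →
      (ρ.Lzero a b w₀ ≠ ⊥ ∧
        ∀ M : Submodule ℂ (ℤ →₀ W), ActInvariant (ρ.Lact (-1) a (b + 1)) M →
          M ≤ ρ.Lzero a b w₀ → M = ⊥ ∨ M = ρ.Lzero a b w₀) →
      ∀ S : Submodule ℂ (TensorProduct ℂ V A), SimpleTensSub τ σ S →
        ¬ ∃ φ : ↥(ρ.Lzero a b w₀) ≃ₗ[ℂ] ↥S,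
          ∀ (m : ℤ) (u : ↥(ρ.Lzero a b w₀))
            (hu : ρ.Lact (-1) a (b + 1) m ↑u ∈ ρ.Lzero a b w₀),
            (↑(φ ⟨ρ.Lact (-1) a (b + 1) m ↑u, hu⟩) : TensorProduct ℂ V A) =
              tensD τ σ m ↑(φ u)) ∧
    -- (3) L₁(a, b), when simple, is not isomorphic to a simple submodule of V(ċ,h) ⊗ A'
    (∀ w₀ : W, ρ.IsHW w₀ b → b ≠ 0 →
      (ρ.Lone a b w₀ ≠ ⊥ ∧
        ∀ M : Submodule ℂ (ℤ →₀ W), ActInvariant (ρ.Lact (-1) a (b + 1)) M →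
          M ≤ ρ.Lone a b w₀ → M = ⊥ ∨ M = ρ.Lone a b w₀) →
      ∀ S : Submodule ℂ (TensorProduct ℂ V A), SimpleTensSub τ σ S →
        ¬ ∃ φ : ↥(ρ.Lone a b w₀) ≃ₗ[ℂ] ↥S,
          ∀ (m : ℤ) (u : ↥(ρ.Lone a b w₀))
            (hu : ρ.Lact (-1) a (b + 1) m ↑u ∈ ρ.Lone a b w₀),
            (↑(φ ⟨ρ.Lact (-1) a (b + 1) m ↑u, hu⟩) : TensorProduct ℂ V A) =
              tensD τ σ m ↑(φ u)) := by
  have hQall := Qlemma τ hτs v₁ hv₁ hdi σ a₁ b₁ vA hspan hAct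
  refine ⟨?_, ?_, ?_⟩
  · intro _hsimple S _hS
    rintro ⟨φ, hφ⟩
    exact part1core ρ hO hnt lam a b hlam τ σ hQall S φ hφ
  · intro w₀ hw hbne _hLs S _hS
    rintro ⟨φ, hφ⟩
    refine part23core ρ a b w₀ hw hbne τ σ hQall (ρ.Lzero a b w₀) 0 ?_ S φ hφ
    intro i j
    exact Submodule.subset_span ⟨i, j, by norm_num⟩
  · intro w₀ hw hbne _hLs S _hS
    rintro ⟨φ, hφ⟩
    refine part23core ρ a b w₀ hw hbne τ σ hQall (ρ.Lone a b w₀) 1 ?_ S φ hφ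
    intro i j
    exact Submodule.subset_span ⟨i, j, rfl⟩
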